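/- For every integer p ≥ 2, H_p = (r^p sin θ − r sin(pθ) + sin((p−1)θ)) / ((r² − 2r cos θ + 1) r^{p−2} sin θ); note that the denominator is nonzero since r² − 2r cos θ + 1 > 0 and sin θ > 0 for θ ∈ (0,π). -/

import Mathlib

/-!
Write `z = e^{iθ}`, so `λ₁ = r z` and `λ₂ = r z⁻¹`. The `j`-th inner sum of `H_p` is
`r^{-j} ∑_{k ≤ j} z^{2k-j}`, and multiplying by `z - z⁻¹ = 2i sin θ` telescopes it to
`r^{-j} sin((j+1)θ) / sin θ`. Hence `H_p = ∑_{j < p-1} sin((j+1)θ) x^j / sin θ` with `x = 1/r`, a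
truncated generating function of Chebyshev polynomials of the second kind; multiplying it by
`1 - 2x cos θ + x²` telescopes again, by `sin((m+2)θ) + sin(mθ) = 2 cos θ sin((m+1)θ)`.
-/

/-- H_p = Σ_{j=1}^{p−1} Σ_{k=1}^{j} λ₁^{k−j} λ₂^{1−k}
(indices shifted: j = j'+1, k = k'+1). -/
noncomputable def Hp (l1 l2 : ℂ) (p : ℕ) : ℂ :=
  ∑ j ∈ Finset.range (p - 1), ∑ k ∈ Finset.range (j + 1),
    l1 ^ ((k : ℤ) - (j : ℤ)) * l2 ^ (-(k : ℤ))

open Finset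

theorem sum_range_sin_mul_pow_mul (x θ : ℝ) (m : ℕ) :
    (∑ j ∈ range m, Real.sin ((j + 1) * θ) * x ^ j) * (1 - 2 * x * Real.cos θ + x ^ 2) =
      Real.sin θ - x ^ m * Real.sin ((m + 1) * θ) + x ^ (m + 1) * Real.sin (m * θ) := by
  induction m with
  | zero => simp
  | succ m ih =>
    have hsin : Real.sin ((m + 1 + 1) * θ) + Real.sin (m * θ) =
        2 * Real.sin ((m + 1) * θ) * Real.cos θ := by
      rw [show (m + 1 + 1) * θ = (m + 1) * θ + θ by ring,
        show m * θ = (m + 1) * θ - θ by ring, Real.sin_add, Real.sin_sub]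
      ring
    rw [sum_range_succ, add_mul, ih]
    push_cast
    linear_combination x ^ (m + 1) * hsin

theorem sum_range_sin_mul_inv_pow_mul {r : ℝ} (hr : r ≠ 0) (θ : ℝ) (n : ℕ) :
    (∑ j ∈ range (n + 1), Real.sin ((j + 1) * θ) * r⁻¹ ^ j) *
        ((r ^ 2 - 2 * r * Real.cos θ + 1) * r ^ n) =
      r ^ (n + 2) * Real.sin θ - r * Real.sin ((n + 2) * θ) + Real.sin ((n + 1) * θ) := by
  have key := sum_range_sin_mul_pow_mul r⁻¹ θ (n + 1)
  have e1 : r ^ (n + 2) * r⁻¹ ^ (n + 1) = r := by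
    rw [pow_succ, mul_right_comm, ← mul_pow, mul_inv_cancel₀ hr, one_pow, one_mul]
  have e2 : r ^ (n + 2) * r⁻¹ ^ (n + 2) = 1 := by
    rw [← mul_pow, mul_inv_cancel₀ hr, one_pow]
  have e3 : r ^ (n + 2) * (1 - 2 * r⁻¹ * Real.cos θ + r⁻¹ ^ 2) =
      (r ^ 2 - 2 * r * Real.cos θ + 1) * r ^ n := by
    rw [pow_add]
    field_simp
  push_cast at key
  rw [show ((n : ℝ) + 2) * θ = (n + 1 + 1) * θ by ring]
  linear_combination r ^ (n + 2) * key
    - (∑ j ∈ range (n + 1), Real.sin ((j + 1) * θ) * r⁻¹ ^ j) * e3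
    - Real.sin ((n + 1 + 1) * θ) * e1 + Real.sin ((n + 1) * θ) * e2

theorem sub_inv_mul_sum_zpow {K : Type*} [Field K] {z : K} (hz : z ≠ 0) (j : ℕ) :
    (z - z⁻¹) * ∑ k ∈ range (j + 1), z ^ (2 * (k : ℤ) - j) = z ^ (j + 1) - (z ^ (j + 1))⁻¹ := by
  have hstep : ∀ k : ℕ, (z - z⁻¹) * z ^ (2 * (k : ℤ) - j) =
      z ^ (2 * ((k + 1 : ℕ) : ℤ) - j - 1) - z ^ (2 * (k : ℤ) - j - 1) := by
    intro k
    push_cast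
    rw [show 2 * ((k : ℤ) + 1) - j - 1 = (2 * k - j) + 1 by ring, zpow_add_one₀ hz,
      show 2 * (k : ℤ) - j - 1 = (2 * k - j) + (-1) by ring, zpow_add₀ hz, zpow_neg_one]
    ring
  rw [mul_sum, sum_congr rfl fun k _ => hstep k,
    sum_range_sub (fun k : ℕ => z ^ (2 * (k : ℤ) - j - 1)),
    show 2 * ((j + 1 : ℕ) : ℤ) - j - 1 = ((j + 1 : ℕ) : ℤ) by push_cast; ring,
    show 2 * ((0 : ℕ) : ℤ) - j - 1 = -((j + 1 : ℕ) : ℤ) by push_cast; ring,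
    zpow_neg, zpow_natCast]

theorem sum_range_exp_mul_I_zpow {θ : ℝ} (hθ : Real.sin θ ≠ 0) (j : ℕ) :
    ∑ k ∈ range (j + 1), Complex.exp (θ * Complex.I) ^ (2 * (k : ℤ) - j) =
      (Real.sin ((j + 1) * θ) / Real.sin θ : ℝ) := by
  have hsub : ∀ x : ℝ, Complex.exp (x * Complex.I) - (Complex.exp (x * Complex.I))⁻¹ =
      2 * Complex.I * (Real.sin x : ℂ) := by
    intro x
    rw [← Complex.exp_neg, ← neg_mul, ← Complex.ofReal_neg, Complex.exp_mul_I, Complex.exp_mul_I]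
    push_cast
    rw [Complex.cos_neg, Complex.sin_neg]
    ring
  have key := sub_inv_mul_sum_zpow (Complex.exp_ne_zero (θ * Complex.I)) j
  rw [← Complex.exp_nat_mul, hsub θ,
    show ((j + 1 : ℕ) : ℂ) * (θ * Complex.I) = (((j + 1) * θ : ℝ) : ℂ) * Complex.I by
      push_cast; ring,
    hsub] at key
  rw [Complex.ofReal_div, eq_div_iff (by exact_mod_cast hθ)]
  exact mul_left_cancel₀ (by simp : (2 * Complex.I) ≠ 0) (by linear_combination key)

theorem Hp_mul_mul_inv {a b : ℂ} (ha : a ≠ 0) (hb : b ≠ 0) (p : ℕ) :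
    Hp (a * b) (a * b⁻¹) p =
      ∑ j ∈ range (p - 1), a ^ (-(j : ℤ)) * ∑ k ∈ range (j + 1), b ^ (2 * (k : ℤ) - j) := by
  refine sum_congr rfl fun j _ => ?_
  rw [mul_sum]
  refine sum_congr rfl fun k _ => ?_
  rw [mul_zpow, mul_zpow, inv_zpow', neg_neg, mul_mul_mul_comm, ← zpow_add₀ ha, ← zpow_add₀ hb]
  congr 2 <;> ring

/-- With λ₁ = r e^{iθ} and λ₂ = r e^{−iθ}, for every p ≥ 2:
H_p = (r^p sin θ − r sin(pθ) + sin((p−1)θ)) / ((r² − 2r cos θ + 1) r^{p−2} sin θ). -/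
theorem Hp_eq_trig (r θ : ℝ) (hr : 0 < r) (hθ0 : 0 < θ) (hθπ : θ < Real.pi)
    (p : ℕ) (hp : 2 ≤ p) :
    Hp ((r : ℂ) * Complex.exp ((θ : ℂ) * Complex.I))
       ((r : ℂ) * Complex.exp (-(θ : ℂ) * Complex.I)) p
      = (((r ^ p * Real.sin θ - r * Real.sin (p * θ) + Real.sin (((p : ℝ) - 1) * θ)) /
          ((r ^ 2 - 2 * r * Real.cos θ + 1) * r ^ (p - 2) * Real.sin θ) : ℝ) : ℂ) := by
  obtain ⟨n, rfl⟩ : ∃ n, p = n + 2 := ⟨p - 2, by omega⟩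
  have hsin : 0 < Real.sin θ := Real.sin_pos_of_pos_of_lt_pi hθ0 hθπ
  have hD : 0 < r ^ 2 - 2 * r * Real.cos θ + 1 := by
    nlinarith [sq_nonneg (r - Real.cos θ), Real.sin_sq_add_cos_sq θ]
  have hterm : ∀ j : ℕ, (r : ℂ) ^ (-(j : ℤ)) * ((Real.sin ((j + 1) * θ) / Real.sin θ : ℝ) : ℂ) =
      ((Real.sin ((j + 1) * θ) * r⁻¹ ^ j / Real.sin θ : ℝ) : ℂ) := by
    intro j
    push_cast
    rw [zpow_neg, zpow_natCast, inv_pow]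
    ring
  rw [neg_mul, Complex.exp_neg, Hp_mul_mul_inv (by exact_mod_cast hr.ne') (Complex.exp_ne_zero _)]
  simp_rw [sum_range_exp_mul_I_zpow hsin.ne', hterm, ← Complex.ofReal_sum, ← sum_div]
  congr 1
  rw [show n + 2 - 1 = n + 1 by omega, show n + 2 - 2 = n by omega,
    div_eq_div_iff hsin.ne' (by positivity)]
  push_cast
  rw [show ((n : ℝ) + 2 - 1) * θ = (n + 1) * θ by ring]
  linear_combination Real.sin θ * sum_range_sin_mul_inv_pow_mul hr.ne' θ n
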